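/- Let D₀ ⊆ ℂ be a nonempty bounded convex open set, let ζ₀ ∈ D₀ satisfy dist(ζ₀, ∂D₀) = sup_{ζ ∈ D₀} dist(ζ, ∂D₀), and write R = dist(ζ₀, ∂D₀). Then for every r with 0 < r < (√3/(5+√3))·R there exist points p̃, q̃ ∈ D₀ and p̂, q̂ ∈ ∂D₀ such that the open discs of radius r centered at p̃ and at q̃ are contained in D₀, |p̂ − p̃| = r, |q̂ − q̃| = r, and |p̂ − q̂| > 5r. -/

import Mathlib

/-!
Let `s` be a boundary point nearest to the centre `ζ₀`, so `|s - ζ₀| = R`, and let `b` be the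
point at distance `R - r` from `ζ₀` on the ray opposite to `s`. The disc of radius `r` tangent
to `∂D₀` at `s` inside `B(ζ₀, R)` gives `p̃`; the disc of radius `r` tangent to `∂D₀` at a
boundary point `q` nearest to `b` gives `q̃`. Since `q ∉ B(ζ₀, R)` while `|q - b| ≤ R` by
maximality of `R`, the point `q` lies on the far side of the bisector of `ζ₀` and `b`,
which forces `|s - q|² ≥ 2R² + R(R - r) > (5r)²` for `r < √3 R / (5 + √3)`.
-/

open Metric Set AffineMap RealInnerProductSpace

section NormedSpace

variable {E : Type*} [NormedAddCommGroup E] [NormedSpace ℝ E]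

theorem ball_infDist_frontier_subset [FiniteDimensional ℝ E] {U : Set E} {x : E} (hx : x ∈ U) :
    ball x (infDist x (frontier U)) ⊆ U := by
  rcases eq_or_ne U univ with rfl | hU
  · exact subset_univ _
  obtain ⟨y, hy, hxy⟩ := exists_mem_frontier_infDist_compl_eq_dist hx hU
  exact (ball_subset_ball ((infDist_le_dist_of_mem hy).trans_eq hxy.symm)).trans
    ball_infDist_compl_subset

theorem exists_tangent_ball_subset {U : Set E} {c y : E} {ρ r : ℝ} (hU : ball c ρ ⊆ U)
    (hy : dist y c = ρ) (hr : 0 < r) (hrρ : r ≤ ρ) :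
    ∃ z ∈ U, ball z r ⊆ U ∧ dist y z = r := by
  have hρ : 0 < ρ := hr.trans_le hrρ
  have hzc : dist (lineMap y c (r / ρ)) c = ρ - r := by
    rw [dist_lineMap_right, hy,
      Real.norm_of_nonneg (by rw [sub_nonneg, div_le_one hρ]; exact hrρ)]
    field_simp
  have hball : ball (lineMap y c (r / ρ)) r ⊆ U :=
    (ball_subset_ball' (by rw [hzc]; linarith)).trans hU
  refine ⟨_, hball (mem_ball_self hr), hball, ?_⟩
  rw [dist_left_lineMap, hy, Real.norm_of_nonneg (div_pos hr hρ).le, div_mul_cancel₀ _ hρ.ne']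

end NormedSpace

section InnerProductSpace

variable {E : Type*} [NormedAddCommGroup E] [InnerProductSpace ℝ E]

theorem two_mul_inner_le_neg_sq_norm_of_norm_add_le {v w : E} (h : ‖v + w‖ ≤ ‖v‖) :
    2 * ⟪v, w⟫ ≤ -‖w‖ ^ 2 := by
  have := pow_le_pow_left₀ (norm_nonneg _) h 2
  rw [norm_add_sq_real] at this
  linarith

/-- `lineMap a s (-(t / R))` is the point at distance `t` from `a` on the ray opposite to `s`. -/
theorem le_sq_dist_of_dist_lineMap_neg_le {a s q : E} {R t : ℝ} (hR : 0 < R) (ht : 0 < t)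
    (hs : dist s a = R) (hqa : R ≤ dist q a) (hqb : dist q (lineMap a s (-(t / R))) ≤ R) :
    2 * R ^ 2 + R * t ≤ dist s q ^ 2 := by
  rw [dist_eq_norm] at hs hqa hqb ⊢
  have hsplit : q - lineMap a s (-(t / R)) = (q - a) + (t / R) • (s - a) := by
    rw [lineMap_apply_module']; module
  rw [hsplit] at hqb
  have hinner := two_mul_inner_le_neg_sq_norm_of_norm_add_le (hqb.trans hqa)
  rw [inner_smul_right, norm_smul, hs, Real.norm_of_nonneg (div_pos ht hR).le] at hinner
  have hinner_s : 2 * ⟪q - a, s - a⟫ ≤ -(R * t) := by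
    field_simp at hinner
    nlinarith
  have hqa2 := pow_le_pow_left₀ hR.le hqa 2
  rw [show s - q = (s - a) - (q - a) by abel, norm_sub_sq_real, hs, real_inner_comm]
  linarith

end InnerProductSpace

theorem lt_of_lt_sqrt_three_div_mul {r R : ℝ} (hr : 0 < r)
    (h : r < √3 / (5 + √3) * R) : r < R := by
  have hc : 0 < √3 / (5 + √3) := by positivity
  have hc1 : √3 / (5 + √3) < 1 := by rw [div_lt_one (by positivity)]; linarith
  nlinarith

theorem sq_five_mul_lt_of_lt_sqrt_three_div_mul {r R : ℝ} (hr : 0 < r)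
    (h : r < √3 / (5 + √3) * R) : (5 * r) ^ 2 < 2 * R ^ 2 + R * (R - r) := by
  have hrR := lt_of_lt_sqrt_three_div_mul hr h
  have h5 : 5 * r < √3 * (R - r) := by
    rw [div_mul_eq_mul_div, lt_div_iff₀ (by positivity)] at h
    linarith
  have h3 : (√3 * (R - r)) ^ 2 = 3 * (R - r) ^ 2 := by
    rw [mul_pow, Real.sq_sqrt (by norm_num)]
  nlinarith [pow_lt_pow_left₀ h5 (by positivity) two_ne_zero]

theorem exists_two_tangent_discs_general
    (D₀ : Set ℂ) (hopen : IsOpen D₀) (ζ₀ : ℂ) (hζ₀ : ζ₀ ∈ D₀)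
    (hmax : ∀ ζ ∈ D₀, infDist ζ (frontier D₀) ≤ infDist ζ₀ (frontier D₀))
    (r : ℝ) (hr : 0 < r)
    (hrR : r < Real.sqrt 3 / (5 + Real.sqrt 3) * infDist ζ₀ (frontier D₀)) :
    ∃ ptilde qtilde phat qhat : ℂ,
      ptilde ∈ D₀ ∧ qtilde ∈ D₀ ∧ phat ∈ frontier D₀ ∧ qhat ∈ frontier D₀ ∧
      ball ptilde r ⊆ D₀ ∧ ball qtilde r ⊆ D₀ ∧
      dist phat ptilde = r ∧ dist qhat qtilde = r ∧ 5 * r < dist phat qhat := by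
  set R := infDist ζ₀ (frontier D₀)
  have hrR' : r < R := lt_of_lt_sqrt_three_div_mul hr hrR
  have hR : 0 < R := hr.trans hrR'
  have hfr : (frontier D₀).Nonempty :=
    nonempty_iff_ne_empty.2 fun h => by simp [R, h] at hR
  have hball : ball ζ₀ R ⊆ D₀ := ball_infDist_frontier_subset hζ₀
  obtain ⟨s, hs, hsR⟩ := isClosed_frontier.exists_infDist_eq_dist hfr ζ₀
  obtain ⟨pt, hpt, hptball, hspt⟩ :=
    exists_tangent_ball_subset hball (by rw [dist_comm, ← hsR]) hr hrR'.le
  set b := lineMap ζ₀ s (-((R - r) / R))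
  have hbζ : dist b ζ₀ = R - r := by
    rw [dist_lineMap_left, norm_neg, ← hsR, Real.norm_of_nonneg (by bound),
      div_mul_cancel₀ _ hR.ne']
  have hb : b ∈ D₀ := hball (by rw [mem_ball, hbζ]; linarith)
  obtain ⟨q, hq, hqd⟩ := isClosed_frontier.exists_infDist_eq_dist hfr b
  have hrd : r ≤ infDist b (frontier D₀) := by
    have := infDist_le_infDist_add_dist (s := frontier D₀) (x := ζ₀) (y := b)
    rw [dist_comm, hbζ] at this
    linarith
  obtain ⟨qt, hqt, hqtball, hqqt⟩ := exists_tangent_ball_subset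
    (ball_infDist_frontier_subset hb) (by rw [dist_comm, ← hqd]) hr hrd
  have hqζ : R ≤ dist q ζ₀ := not_lt.1 fun h =>
    (disjoint_frontier_iff_isOpen.2 hopen).notMem_of_mem_left hq (hball (mem_ball.2 h))
  have hfar := le_sq_dist_of_dist_lineMap_neg_le hR (sub_pos.2 hrR')
    (by rw [dist_comm, ← hsR]) hqζ (by rw [dist_comm, ← hqd]; exact hmax b hb)
  exact ⟨pt, qt, s, q, hpt, hqt, hs, hq, hptball, hqtball, hspt, hqqt,
    lt_of_pow_lt_pow_left₀ 2 dist_nonneg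
      ((sq_five_mul_lt_of_lt_sqrt_three_div_mul hr hrR).trans_le hfar)⟩

/-- **Lemma 1 (inner discs).** Let `D₀ ⊆ ℂ` be a nonempty bounded convex open set,
`ζ₀ ∈ D₀` a point at maximal distance `R` to the boundary. For every
`0 < r < (√3/(5+√3))·R` there are points `p̃, q̃ ∈ D₀` and `p̂, q̂ ∈ ∂D₀` such that the
open discs of radius `r` centered at `p̃, q̃` lie in `D₀`, `|p̂ − p̃| = |q̂ − q̃| = r`,
and `|p̂ − q̂| > 5r`. -/
theorem exists_two_tangent_discs
    (D₀ : Set ℂ) (hne : D₀.Nonempty) (hconv : Convex ℝ D₀) (hopen : IsOpen D₀)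
    (hbdd : Bornology.IsBounded D₀) (ζ₀ : ℂ) (hζ₀ : ζ₀ ∈ D₀)
    (hmax : ∀ ζ ∈ D₀, infDist ζ (frontier D₀) ≤ infDist ζ₀ (frontier D₀))
    (r : ℝ) (hr : 0 < r)
    (hrR : r < Real.sqrt 3 / (5 + Real.sqrt 3) * infDist ζ₀ (frontier D₀)) :
    ∃ ptilde qtilde phat qhat : ℂ,
      ptilde ∈ D₀ ∧ qtilde ∈ D₀ ∧ phat ∈ frontier D₀ ∧ qhat ∈ frontier D₀ ∧
      ball ptilde r ⊆ D₀ ∧ ball qtilde r ⊆ D₀ ∧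
      dist phat ptilde = r ∧ dist qhat qtilde = r ∧ 5 * r < dist phat qhat :=
  exists_two_tangent_discs_general D₀ hopen ζ₀ hζ₀ hmax r hr hrR
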